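/- In the reduction instance, let π=⟨v_0,…,v_k⟩ be a path with v_0 = a_1 that traverses the upper part of hexagon i, i.e. v_j = b_i and v_{j+1} = c_i for some j, and let T be the no-wait timing profile, i.e. t_0 = ℓ⁺_π(v_0) and t_m = t_{m−1} + ℓ⁺_π(v_{m−1},v_m) for m ≥ 1. Then the reward obtained at b_i and c_i equals exactly α_i; that is, R(b_i, t_{j−1}, t_j) + R(c_i, t_j, t_{j+1}) = α_i. -/
import Mathlib


open MeasureTheory
open scoped Classical

/-- Vertices of the reduction instance: for each hexagon index `i` the vertices
`a i, b i, c i, d i, e i, f i`, plus the two special vertices `u` and `w`. -/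
inductive RVert : Type
  | a : ℕ → RVert
  | b : ℕ → RVert
  | c : ℕ → RVert
  | d : ℕ → RVert
  | e : ℕ → RVert
  | f : ℕ → RVert
  | u : RVert
  | w : RVert
deriving DecidableEq

/-- `κ_i = Σ_{j=1}^{i} x_j` (so `κ_0 = 0`). -/
def kap (x : ℕ → ℕ) (i : ℕ) : ℕ := ∑ j ∈ Finset.Icc 1 i, x j

/-- `y_i = Σ_{j=1}^{i-1} κ_j` (so `y_0 = y_1 = 0`). -/
def yv (x : ℕ → ℕ) (i : ℕ) : ℕ := ∑ j ∈ Finset.Icc 1 (i - 1), kap x j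

/-- `α_i = x_i / κ_n`. -/
noncomputable def alphav (x : ℕ → ℕ) (n i : ℕ) : ℝ := (x i : ℝ) / (kap x n : ℝ)

/-- Edges of the reduction instance: `a_i→b_i, b_i→c_i, c_i→f_i, a_i→d_i,
d_i→e_i, e_i→f_i` for `1 ≤ i ≤ n`, `f_i→a_{i+1}` for `i < n`, `f_n→u`, `u→w`. -/
def redE (n : ℕ) : RVert → RVert → Prop := fun p q =>
  (∃ i, 1 ≤ i ∧ i ≤ n ∧
    ((p = RVert.a i ∧ q = RVert.b i) ∨ (p = RVert.b i ∧ q = RVert.c i) ∨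
     (p = RVert.c i ∧ q = RVert.f i) ∨ (p = RVert.a i ∧ q = RVert.d i) ∨
     (p = RVert.d i ∧ q = RVert.e i) ∨ (p = RVert.e i ∧ q = RVert.f i))) ∨
  (∃ i, 1 ≤ i ∧ i < n ∧ p = RVert.f i ∧ q = RVert.a (i + 1)) ∨
  (p = RVert.f n ∧ q = RVert.u) ∨ (p = RVert.u ∧ q = RVert.w)

/-- Edge lengths: `ℓ(b_i, c_i) = κ_i`, `ℓ(d_i, e_i) = κ_{i-1}`, all other edges
have length `0`. -/
noncomputable def redLen (x : ℕ → ℕ) : RVert → RVert → ℝ := fun p q =>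
  match p, q with
  | RVert.b i, RVert.c j => if i = j then (kap x i : ℝ) else 0
  | RVert.d i, RVert.e j => if i = j then (kap x (i - 1) : ℝ) else 0
  | _, _ => 0

/-- Assistance intervals: `𝓘(b_i) = 𝓘(c_i) = {[y_i, y_i + α_i]}` for
`1 ≤ i ≤ n`, `𝓘(w) = {[y_n + K, y_n + K + 1]}`, and `𝓘` is empty elsewhere. -/
noncomputable def redI (x : ℕ → ℕ) (n K : ℕ) : RVert → Finset (ℝ × ℝ) := fun p =>
  match p with
  | RVert.b i =>
      if 1 ≤ i ∧ i ≤ n then {((yv x i : ℝ), (yv x i : ℝ) + alphav x n i)} else ∅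
  | RVert.c i =>
      if 1 ≤ i ∧ i ≤ n then {((yv x i : ℝ), (yv x i : ℝ) + alphav x n i)} else ∅
  | RVert.w => {((yv x n : ℝ) + K, (yv x n : ℝ) + K + 1)}
  | _ => ∅

/-- `v 0, v 1, …, v k` is a path in the reduction instance. -/
def rIsPath (n : ℕ) (v : ℕ → RVert) (k : ℕ) : Prop :=
  ∀ i, i < k → redE n (v i) (v (i + 1))

/-- `ℓ_π(v_i)`: length of the path from `v 0` to `v i`. -/
noncomputable def rPathLen (x : ℕ → ℕ) (v : ℕ → RVert) (i : ℕ) : ℝ :=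
  ∑ j ∈ Finset.range i, redLen x (v j) (v (j + 1))

/-- `ℓ⁺_π(v_i)` (with the convention `ℓ(v_k, v_{k+1}) = 0`). -/
noncomputable def rEllPlus (x : ℕ → ℕ) (v : ℕ → RVert) (k i : ℕ) : ℝ :=
  rPathLen x v i + (if i < k then redLen x (v i) (v (i + 1)) / 2 else 0)

/-- Reward at a vertex `p` between times `t` and `t'`:
`R(p, t, t') = Σ_{I ∈ 𝓘(p)} λ([t,t'] ∩ I)`. -/
noncomputable def rvReward (x : ℕ → ℕ) (n K : ℕ) (p : RVert) (t t' : ℝ) : ℝ :=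
  ∑ q ∈ redI x n K p, (volume (Set.Icc t t' ∩ Set.Icc q.1 q.2)).toReal

/-- `T 0, …, T (k-1)` is a timing profile for the path `v 0, …, v k` with time
horizon `H = y_n + K + 1`. -/
def rIsTP (x : ℕ → ℕ) (v : ℕ → RVert) (k : ℕ) (H : ℝ) (T : ℕ → ℝ) : Prop :=
  (1 ≤ k → rEllPlus x v k 0 ≤ T 0) ∧
  (∀ i, i + 2 ≤ k → T i + (rEllPlus x v k (i + 1) - rEllPlus x v k i) ≤ T (i + 1)) ∧
  (1 ≤ k → T (k - 1) + (rEllPlus x v k k - rEllPlus x v k (k - 1)) ≤ H)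

/-- Reward of a timing profile over horizon `H`:
`R(π, T) = Σ_{i=0}^{k} R(v_i, t_{i-1}, t_i)` with `t_{-1} = 0`, `t_k = H`. -/
noncomputable def rProfReward (x : ℕ → ℕ) (n K : ℕ) (v : ℕ → RVert) (k : ℕ)
    (H : ℝ) (T : ℕ → ℝ) : ℝ :=
  ∑ i ∈ Finset.range (k + 1),
    rvReward x n K (v i) (if i = 0 then 0 else T (i - 1)) (if i = k then H else T i)

/-- Admissibility: the robot leaves `u` by time `y_n + K` and the path does not
end at `u`. -/
def rAdmissible (x : ℕ → ℕ) (n K : ℕ) (v : ℕ → RVert) (k : ℕ) (T : ℕ → ℝ) : Prop :=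
  (∀ i, i < k → v i = RVert.u → T i ≤ (yv x n : ℝ) + K) ∧ v k ≠ RVert.u


section Stmt13Aux

lemma kap_mono (x : ℕ → ℕ) {i j : ℕ} (h : i ≤ j) : kap x i ≤ kap x j :=
  Finset.sum_le_sum_of_subset (Finset.Icc_subset_Icc_right h)

lemma kap_succ (x : ℕ → ℕ) (m : ℕ) : kap x (m + 1) = kap x m + x (m + 1) :=
  Finset.sum_Icc_succ_top (by omega) x

lemma yv_succ (x : ℕ → ℕ) (m : ℕ) : yv x (m + 1) = yv x m + kap x m := by
  cases m with
  | zero => simp [yv, kap]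
  | succ m =>
    show ∑ j ∈ Finset.Icc 1 (m + 1), kap x j = (∑ j ∈ Finset.Icc 1 m, kap x j) + kap x (m + 1)
    exact Finset.sum_Icc_succ_top (by omega) _

lemma redLen_nonneg (x : ℕ → ℕ) (p q : RVert) : 0 ≤ redLen x p q := by
  cases p <;> cases q <;> simp [redLen] <;> split <;> positivity

/-- Invariant along paths: bounds on the accumulated length at each vertex. -/
def rInv (x : ℕ → ℕ) (n : ℕ) (p : RVert) (L : ℝ) : Prop :=
  match p with
  | RVert.a i => 1 ≤ i ∧ i ≤ n ∧ (yv x (i - 1) : ℝ) ≤ L ∧ L ≤ (yv x i : ℝ)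
  | RVert.b i => 1 ≤ i ∧ i ≤ n ∧ (yv x (i - 1) : ℝ) ≤ L ∧ L ≤ (yv x i : ℝ)
  | RVert.d i => 1 ≤ i ∧ i ≤ n ∧ (yv x (i - 1) : ℝ) ≤ L ∧ L ≤ (yv x i : ℝ)
  | RVert.c i => 1 ≤ i ∧ i ≤ n ∧ (yv x (i - 1) : ℝ) + kap x i ≤ L ∧
      L ≤ (yv x i : ℝ) + kap x i
  | RVert.e i => 1 ≤ i ∧ i ≤ n ∧ (yv x i : ℝ) ≤ L ∧ L ≤ (yv x i : ℝ) + kap x (i - 1)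
  | RVert.f i => 1 ≤ i ∧ i ≤ n ∧ (yv x i : ℝ) ≤ L ∧ L ≤ (yv x (i + 1) : ℝ)
  | _ => True

lemma yv_eq (x : ℕ → ℕ) {i : ℕ} (hi : 1 ≤ i) :
    (yv x i : ℝ) = (yv x (i - 1) : ℝ) + (kap x (i - 1) : ℝ) := by
  have := yv_succ x (i - 1)
  rw [show i - 1 + 1 = i from by omega] at this
  exact_mod_cast this

lemma kap_eq (x : ℕ → ℕ) {i : ℕ} (hi : 1 ≤ i) :
    (kap x i : ℝ) = (kap x (i - 1) : ℝ) + (x i : ℝ) := by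
  have := kap_succ x (i - 1)
  rw [show i - 1 + 1 = i from by omega] at this
  exact_mod_cast this

lemma kap_le_cast (x : ℕ → ℕ) {i j : ℕ} (h : i ≤ j) : (kap x i : ℝ) ≤ (kap x j : ℝ) := by
  exact_mod_cast kap_mono x h

lemma rInv_step (x : ℕ → ℕ) (n : ℕ) {p q : RVert} {L : ℝ} (hpq : redE n p q)
    (h : rInv x n p L) : rInv x n q (L + redLen x p q) := by
  rcases hpq with ⟨i, hi1, hin, hc⟩ | ⟨i, hi1, hin, hp, hq⟩ | ⟨hp, hq⟩ | ⟨hp, hq⟩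
  · rcases hc with ⟨hp, hq⟩ | ⟨hp, hq⟩ | ⟨hp, hq⟩ | ⟨hp, hq⟩ | ⟨hp, hq⟩ | ⟨hp, hq⟩ <;>
      subst hp <;> subst hq <;>
      simp only [rInv, redLen, if_pos rfl, if_true, eq_self_iff_true] at h ⊢
    · obtain ⟨_, _, h1, h2⟩ := h
      exact ⟨hi1, hin, by linarith, by linarith⟩
    · obtain ⟨_, _, h1, h2⟩ := h
      exact ⟨hi1, hin, by linarith, by linarith⟩
    · obtain ⟨_, _, h1, h2⟩ := h
      have e1 := yv_eq x hi1
      have e2 : (yv x (i + 1) : ℝ) = (yv x i : ℝ) + (kap x i : ℝ) := by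
        exact_mod_cast yv_succ x i
      have e3 := kap_le_cast x (Nat.sub_le i 1)
      exact ⟨hi1, hin, by linarith, by linarith⟩
    · obtain ⟨_, _, h1, h2⟩ := h
      exact ⟨hi1, hin, by linarith, by linarith⟩
    · obtain ⟨_, _, h1, h2⟩ := h
      have e1 := yv_eq x hi1
      exact ⟨hi1, hin, by linarith, by linarith⟩
    · obtain ⟨_, _, h1, h2⟩ := h
      have e2 : (yv x (i + 1) : ℝ) = (yv x i : ℝ) + (kap x i : ℝ) := by
        exact_mod_cast yv_succ x i
      have e3 := kap_le_cast x (Nat.sub_le i 1)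
      exact ⟨hi1, hin, by linarith, by linarith⟩
  · subst hp; subst hq
    have hz : redLen x (RVert.f i) (RVert.a (i + 1)) = 0 := rfl
    rw [hz, add_zero]
    simp only [rInv] at h ⊢
    obtain ⟨_, _, h1, h2⟩ := h
    refine ⟨by omega, by omega, ?_, h2⟩
    simpa using h1
  · subst hp; subst hq; trivial
  · subst hp; subst hq; trivial

lemma rInv_path (x : ℕ → ℕ) (n : ℕ) (hn : 1 ≤ n) (v : ℕ → RVert) (k : ℕ)
    (hpath : rIsPath n v k) (h0 : v 0 = RVert.a 1) :
    ∀ m, m ≤ k → rInv x n (v m) (rPathLen x v m) := by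
  intro m
  induction m with
  | zero =>
    intro _
    rw [h0]
    simp only [rInv, rPathLen, Finset.range_zero, Finset.sum_empty]
    refine ⟨le_refl 1, hn, ?_, ?_⟩ <;> simp [yv]
  | succ m ih =>
    intro hmk
    have hL : rPathLen x v (m + 1) = rPathLen x v m + redLen x (v m) (v (m + 1)) :=
      Finset.sum_range_succ _ m
    rw [hL]
    exact rInv_step x n (hpath m (by omega)) (ih (by omega))

lemma key_max (t0 tj t2 y a : ℝ) (h0 : t0 ≤ y) (ha : 0 ≤ a) (h2 : y + a ≤ t2) :
    max (min tj (y + a) - max t0 y) 0 + max (min t2 (y + a) - max tj y) 0 = a := by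
  rw [max_eq_right h0, min_eq_right h2]
  rcases le_total tj y with h | h
  · rw [min_eq_left (by linarith), max_eq_right h,
      max_eq_right (by linarith : tj - y ≤ 0), max_eq_left (by linarith : (0:ℝ) ≤ y + a - y)]
    ring
  · rcases le_total tj (y + a) with h' | h'
    · rw [min_eq_left h', max_eq_left h, max_eq_left (by linarith : (0:ℝ) ≤ tj - y),
        max_eq_left (by linarith : (0:ℝ) ≤ y + a - tj)]
      ring
    · rw [min_eq_right h', max_eq_left h, max_eq_left (by linarith : (0:ℝ) ≤ y + a - y),
        max_eq_right (by linarith : y + a - tj ≤ 0)]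
      ring

end Stmt13Aux

/-- **Lemma 3 of the reduction.** If a path from `a_1` traverses
the upper part of hexagon `i` (i.e. `v_j = b_i`, `v_{j+1} = c_i`) and `T` is
the no-wait timing profile, then the reward obtained at `b_i` and `c_i` is
exactly `α_i`. -/
theorem stmt13 (n : ℕ) (hn : 1 ≤ n) (x : ℕ → ℕ)
    (hx : ∀ i, 1 ≤ i → i ≤ n → 0 < x i)
    (hmono : ∀ i j, 1 ≤ i → i ≤ j → j ≤ n → x i ≤ x j)
    (K : ℕ) (hK : 0 < K) (hKn : K ≤ kap x n)
    (v : ℕ → RVert) (k : ℕ) (hpath : rIsPath n v k) (h0 : v 0 = RVert.a 1)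
    (T : ℕ → ℝ) (hT0 : T 0 = rEllPlus x v k 0)
    (hTstep : ∀ m, 1 ≤ m → T m = T (m - 1) + (rEllPlus x v k m - rEllPlus x v k (m - 1)))
    (j i : ℕ) (hjk : j + 1 ≤ k) (hi1 : 1 ≤ i) (hin : i ≤ n)
    (hb : v j = RVert.b i) (hc : v (j + 1) = RVert.c i) :
    rvReward x n K (RVert.b i) (if j = 0 then 0 else T (j - 1)) (T j) +
      rvReward x n K (RVert.c i) (T j) (T (j + 1)) = alphav x n i := by
  classical
  -- basic positivity facts
  have hxn : 0 < x n := hx n hn le_rfl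
  have hkn : 0 < kap x n :=
    lt_of_lt_of_le hxn (Finset.single_le_sum (fun i _ => Nat.zero_le (x i))
      (Finset.mem_Icc.mpr ⟨hn, le_rfl⟩))
  have hknR : (1 : ℝ) ≤ (kap x n : ℝ) := by exact_mod_cast hkn
  have hxiR : (1 : ℝ) ≤ (x i : ℝ) := by exact_mod_cast hx i hi1 hin
  have ha0 : 0 ≤ alphav x n i := by
    unfold alphav; positivity
  have ha1 : alphav x n i ≤ (x i : ℝ) := by
    rw [alphav, div_le_iff₀ (by linarith)]
    nlinarith
  -- the timing profile has no waiting
  have hTe : ∀ m, T m = rEllPlus x v k m := by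
    intro m
    induction m with
    | zero => exact hT0
    | succ m ih =>
      have h := hTstep (m + 1) (by omega)
      simp only [Nat.add_sub_cancel] at h
      rw [h, ih]; ring
  have hLsucc : ∀ m, rPathLen x v (m + 1) = rPathLen x v m + redLen x (v m) (v (m + 1)) :=
    fun m => Finset.sum_range_succ _ m
  -- invariant at position j
  have hInv := rInv_path x n hn v k hpath h0 j (by omega)
  rw [hb] at hInv
  simp only [rInv] at hInv
  obtain ⟨-, -, hL1, hL2⟩ := hInv
  set L := rPathLen x v j with hLdef
  have hlen : redLen x (v j) (v (j + 1)) = (kap x i : ℝ) := by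
    rw [hb, hc]; simp [redLen]
  -- value of T j
  have hTj : T j = L + (kap x i : ℝ) / 2 := by
    rw [hTe j, rEllPlus, if_pos (by omega : j < k), hlen]
  -- the arrival time at b i is at most y_i
  have ht0 : (if j = 0 then (0 : ℝ) else T (j - 1)) ≤ (yv x i : ℝ) := by
    split
    · positivity
    · next hj =>
      rw [hTe (j - 1), rEllPlus]
      have hj1 : j - 1 + 1 = j := by omega
      have hLj : L = rPathLen x v (j - 1) + redLen x (v (j - 1)) (v j) := by
        rw [hLdef, ← hj1, hLsucc (j - 1), hj1]
      have hnn := redLen_nonneg x (v (j - 1)) (v j)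
      split
      · rw [hj1]; linarith
      · linarith [redLen_nonneg x (v (j-1)) (v j)]
  -- T (j+1) exceeds the right endpoint of the interval
  have hT2 : (yv x i : ℝ) + alphav x n i ≤ T (j + 1) := by
    rw [hTe (j + 1), rEllPlus, hLsucc j, hlen]
    have e1 := yv_eq x hi1
    have e2 := kap_eq x hi1
    have hnn : (0 : ℝ) ≤ (if j + 1 < k then redLen x (v (j + 1)) (v (j + 1 + 1)) / 2 else 0) := by
      split
      · linarith [redLen_nonneg x (v (j + 1)) (v (j + 1 + 1))]
      · exact le_refl 0
    rw [← hLdef]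
    linarith
  -- rewards are lengths of interval intersections
  have hR : ∀ p : RVert, redI x n K p = {((yv x i : ℝ), (yv x i : ℝ) + alphav x n i)} →
      ∀ t t' : ℝ, rvReward x n K p t t' =
        max (min t' ((yv x i : ℝ) + alphav x n i) - max t (yv x i : ℝ)) 0 := by
    intro p hp t t'
    rw [rvReward, hp, Finset.sum_singleton, Set.Icc_inter_Icc, Real.volume_Icc,
      ENNReal.toReal_ofReal']
  have hRb := hR (RVert.b i) (by simp [redI, hi1, hin])
  have hRc := hR (RVert.c i) (by simp [redI, hi1, hin])
  rw [hRb, hRc]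
  exact key_max _ _ _ _ _ ht0 ha0 hT2
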